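/- Let p > q ≥ 1 be coprime integers and let r be the unique integer with 0 < r < p and q·r ≡ 1 (mod p). If the Hirzebruch–Jung continued fraction expansions are p/q = [x₁,…,x_m] and p/(p−r) = [y₁,…,y_k], then the concatenated continued fraction [x₁,…,x_m,1,y₁,…,y_k] evaluates to zero. -/

import Mathlib

/-!
Write `M(a) = !![a, -1; 1, 0]` for the matrix of `t ↦ a - 1/t`. For entries `≥ 2` the product
`M(x₁)⋯M(x_m) = !![P, B; Q, C]` has determinant `1` and `0 ≤ Q < P`, and `[x₁,…,x_m] = P/Q`, so
`P = p` and `Q = q`. Reversing the list transposes the product up to signs, so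
`[x_m,…,x₁] = P/(-B)`, and the determinant gives `q·(-B) ≡ 1 (mod p)`, whence `[x_m,…,x₁] = p/r`.
Finally `[1, y₁,…,y_k] = 1 - (p-r)/p = r/p`, and `[l, 1/[reverse l]] = 0` for every list `l` by
peeling off the last entry, since `a - 1/(1/(a - 1/t)) = 1/t`. This last step needs no
nonvanishing hypotheses: `[l ++ m]` depends on `m` only through `[m]`, even with `1/0 = 0`.
-/

/-- Hirzebruch–Jung continued fraction `[a₁,…,a_l] = a₁ - 1/(a₂ - 1/(⋯ - 1/a_l))`.
(With the junk value `hjcf [] = 0`, Lean's `1/0 = 0` convention gives `hjcf [a] = a`.) -/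
noncomputable def hjcf : List ℝ → ℝ
  | [] => 0
  | a :: l => a - 1 / hjcf l

@[simp] lemma hjcf_nil : hjcf [] = 0 := rfl

@[simp] lemma hjcf_cons (a : ℝ) (l : List ℝ) : hjcf (a :: l) = a - 1 / hjcf l := rfl

lemma hjcf_singleton (a : ℝ) : hjcf [a] = a := by simp

lemma hjcf_append_congr (l : List ℝ) {m m' : List ℝ} (h : hjcf m = hjcf m') :
    hjcf (l ++ m) = hjcf (l ++ m') := by
  induction l with
  | nil => exact h
  | cons a l ih => simp only [List.cons_append, hjcf_cons, ih]

lemma hjcf_append_inv_hjcf_reverse (l : List ℝ) : hjcf (l ++ [(hjcf l.reverse)⁻¹]) = 0 := by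
  induction l using List.reverseRecOn with
  | nil => simp
  | append_singleton l a ih =>
    rw [List.append_assoc, List.singleton_append, ← ih]
    apply hjcf_append_congr
    simp

/-- The matrix of the Möbius map `t ↦ a - 1/t`. -/
def hjMatrix (a : ℤ) : Matrix (Fin 2) (Fin 2) ℤ := !![a, -1; 1, 0]

def hjProd (l : List ℤ) : Matrix (Fin 2) (Fin 2) ℤ := (l.map hjMatrix).prod

@[simp] lemma hjProd_nil : hjProd [] = 1 := rfl

lemma hjProd_cons (a : ℤ) (l : List ℤ) : hjProd (a :: l) = hjMatrix a * hjProd l := rfl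

lemma hjProd_cons_zero_zero (a : ℤ) (l : List ℤ) :
    hjProd (a :: l) 0 0 = a * hjProd l 0 0 - hjProd l 1 0 := by
  simp [hjProd_cons, hjMatrix, Matrix.mul_apply, Fin.sum_univ_two, sub_eq_add_neg]

lemma hjProd_cons_one_zero (a : ℤ) (l : List ℤ) : hjProd (a :: l) 1 0 = hjProd l 0 0 := by
  simp [hjProd_cons, hjMatrix, Matrix.mul_apply, Fin.sum_univ_two]

lemma det_hjProd (l : List ℤ) : (hjProd l).det = 1 := by
  induction l with
  | nil => simp
  | cons a l ih => rw [hjProd_cons, Matrix.det_mul, ih, hjMatrix, Matrix.det_fin_two_of]; ring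

-- The transpose conjugated by `diag(1, -1)`, since `hjMatrix a` is fixed by that operation.
lemma hjProd_reverse (l : List ℤ) :
    hjProd l.reverse = !![hjProd l 0 0, -hjProd l 1 0; -hjProd l 0 1, hjProd l 1 1] := by
  induction l with
  | nil => ext i j; fin_cases i <;> fin_cases j <;> rfl
  | cons a l ih =>
    simp only [hjProd, List.reverse_cons, List.map_append, List.prod_append] at ih ⊢
    rw [ih]
    ext i j; fin_cases i <;> fin_cases j <;> simp [hjMatrix, Matrix.mul_apply, Fin.sum_univ_two] <;> ring

lemma hjProd_first_column_bounds (l : List ℤ) (hl : ∀ a ∈ l, 2 ≤ a) :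
    0 ≤ hjProd l 1 0 ∧ hjProd l 1 0 < hjProd l 0 0 := by
  induction l with
  | nil => simp
  | cons a l ih =>
    obtain ⟨h0, hlt⟩ := ih fun b hb => hl b (List.mem_cons_of_mem a hb)
    have ha := hl a List.mem_cons_self
    rw [hjProd_cons_zero_zero, hjProd_cons_one_zero]
    constructor <;> nlinarith

lemma hjcf_map_eq_div (l : List ℤ) (hl : ∀ a ∈ l, 2 ≤ a) :
    hjcf (l.map Int.cast) = hjProd l 0 0 / hjProd l 1 0 := by
  induction l with
  | nil => simp
  | cons a l ih =>
    have hl' : ∀ b ∈ l, 2 ≤ b := fun b hb => hl b (List.mem_cons_of_mem a hb)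
    obtain ⟨h0, hlt⟩ := hjProd_first_column_bounds l hl'
    have hP : (hjProd l 0 0 : ℝ) ≠ 0 := by exact_mod_cast (h0.trans_lt hlt).ne'
    rw [List.map_cons, hjcf_cons, ih hl', hjProd_cons_zero_zero, hjProd_cons_one_zero]
    push_cast
    field_simp

theorem eq_of_mul_modEq_one {p q s t : ℤ} (hs : 0 ≤ s) (hsp : s < p) (ht : 0 ≤ t) (htp : t < p)
    (hqs : q * s ≡ 1 [ZMOD p]) (hqt : q * t ≡ 1 [ZMOD p]) : s = t := by
  have : s ≡ t [ZMOD p] :=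
    calc s = s * 1 := (mul_one s).symm
      _ ≡ s * (q * t) [ZMOD p] := hqt.symm.mul_left s
      _ = t * (q * s) := by ring
      _ ≡ t * 1 [ZMOD p] := hqs.mul_left t
      _ = t := mul_one t
  rwa [Int.ModEq, Int.emod_eq_of_lt hs hsp, Int.emod_eq_of_lt ht htp] at this

-- The statement's `xs.map (fun a => (a : ℝ))` first lifts `xs` to `List ℝ` through the list monad.
lemma map_coe_eq_map_intCast (l : List ℤ) : l.map (fun a => (a : ℝ)) = l.map Int.cast :=
  (List.map_id _).trans (List.flatMap_pure_eq_map _ l)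

lemma hjProd_first_column_eq (p q : ℕ) (hp : 0 < p) (hq : 0 < q) (hcop : p.Coprime q)
    (xs : List ℤ) (hxs : ∀ a ∈ xs, 2 ≤ a) (hx : hjcf (xs.map Int.cast) = p / q) :
    hjProd xs 0 0 = p ∧ hjProd xs 1 0 = q := by
  set M := hjProd xs
  rw [hjcf_map_eq_div xs hxs] at hx
  have hQpos : 0 < M 1 0 := by
    refine (hjProd_first_column_bounds xs hxs).1.lt_of_ne fun hQ => ?_
    rw [← hQ, Int.cast_zero, div_zero] at hx
    have : (0 : ℝ) < p / q := by positivity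
    linarith
  have hdet : M 0 0 * M 1 1 - M 0 1 * M 1 0 = 1 := by
    rw [← Matrix.det_fin_two, det_hjProd]
  have hMcop : Nat.Coprime (M 0 0).natAbs (M 1 0).natAbs :=
    Int.isCoprime_iff_gcd_eq_one.mp ⟨M 1 1, -M 0 1, by linear_combination hdet⟩
  refine Rat.div_int_inj hQpos (by exact_mod_cast hq) hMcop hcop (Rat.cast_injective (α := ℝ) ?_)
  push_cast
  exact hx

theorem hjcf_reverse_eq (p q r : ℕ) (hq : 0 < q) (hcop : p.Coprime q) (hrp : r < p)
    (hmod : q * r % p = 1) (xs : List ℤ) (hxs : ∀ a ∈ xs, 2 ≤ a)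
    (hx : hjcf (xs.map Int.cast) = p / q) :
    hjcf (xs.reverse.map Int.cast) = p / r := by
  set M := hjProd xs
  have hxs' : ∀ a ∈ xs.reverse, 2 ≤ a := fun a ha => hxs a (List.mem_reverse.mp ha)
  have hrev : hjProd xs.reverse = !![M 0 0, -M 1 0; -M 0 1, M 1 1] := hjProd_reverse xs
  obtain ⟨hP, hQ⟩ : M 0 0 = p ∧ M 1 0 = q :=
    hjProd_first_column_eq p q (by omega) hq hcop xs hxs hx
  obtain ⟨hB0, hBP⟩ := hjProd_first_column_bounds xs.reverse hxs'
  simp only [hrev, Matrix.of_apply, Matrix.cons_val', Matrix.cons_val_zero, Matrix.cons_val_one,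
    Matrix.empty_val', Matrix.cons_val_fin_one, hP] at hB0 hBP
  have hdet : p * M 1 1 - M 0 1 * q = 1 := by
    rw [← hP, ← hQ, ← Matrix.det_fin_two, det_hjProd]
  have hB : -M 0 1 = r := by
    refine eq_of_mul_modEq_one (q := q) hB0 hBP (by positivity) (by exact_mod_cast hrp) ?_ ?_
    · exact Int.modEq_iff_dvd.mpr ⟨M 1 1, by linear_combination -hdet⟩
    · exact_mod_cast Int.natCast_modEq_iff.mpr (hmod ▸ (Nat.mod_modEq (q * r) p).symm)
  rw [hjcf_map_eq_div xs.reverse hxs', hrev]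
  simp [hP, hB]

theorem zero_continued_fraction_concat_general
    (p q r : ℕ) (hq : 1 ≤ q) (hcop : Nat.Coprime p q)
    (hrp : r < p) (hmod : (q * r) % p = 1)
    (xs ys : List ℤ)
    (hxs : ∀ a ∈ xs, (2 : ℤ) ≤ a)
    (hx : hjcf (xs.map (fun a => (a : ℝ))) = (p : ℝ) / (q : ℝ))
    (hy : hjcf (ys.map (fun a => (a : ℝ))) = (p : ℝ) / ((p : ℝ) - (r : ℝ))) :
    hjcf (xs.map (fun a => (a : ℝ)) ++ (1 : ℝ) :: ys.map (fun a => (a : ℝ))) = 0 := by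
  simp only [map_coe_eq_map_intCast] at hx hy ⊢
  have hrev := hjcf_reverse_eq p q r hq hcop hrp hmod xs hxs hx
  rw [List.map_reverse] at hrev
  rw [← hjcf_append_inv_hjcf_reverse (xs.map Int.cast), hrev]
  apply hjcf_append_congr
  have hp : (p : ℝ) ≠ 0 := Nat.cast_ne_zero.mpr (by omega)
  rw [hjcf_cons, hy, hjcf_singleton]
  field_simp
  ring

theorem zero_continued_fraction_concat
    (p q r : ℕ) (hq : 1 ≤ q) (hpq : q < p) (hcop : Nat.Coprime p q)
    (hr0 : 0 < r) (hrp : r < p) (hmod : (q * r) % p = 1)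
    (xs ys : List ℤ)
    (hxs : ∀ a ∈ xs, (2 : ℤ) ≤ a) (hys : ∀ a ∈ ys, (2 : ℤ) ≤ a)
    (hx : hjcf (xs.map (fun a => (a : ℝ))) = (p : ℝ) / (q : ℝ))
    (hy : hjcf (ys.map (fun a => (a : ℝ))) = (p : ℝ) / ((p : ℝ) - (r : ℝ))) :
    hjcf (xs.map (fun a => (a : ℝ)) ++ (1 : ℝ) :: ys.map (fun a => (a : ℝ))) = 0 :=
  zero_continued_fraction_concat_general p q r hq hcop hrp hmod xs ys hxs hx hy
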